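/- arXiv:1807.06720 — 3 statements merged into one kernel-verified Lean document; each statement's English description precedes it below -/
import Mathlib

section
/- Let V be a normal supervisor on the plant G and A an attacker. Then L(V_A/G) coincides with the least language K such that ε ∈ K, and sσ ∈ K whenever s ∈ K, s ∈ L(V/G), σ ∈ V_A(P_o(s)) and sσ ∈ L(G). (That is, in the inductive definition of L(V_A/G) the side condition P_o(s) ∈ P_o(L(V/G)) may be replaced by s ∈ L(V/G).) -/
open scoped Classical

namespace ActuatorAttack

variable {A : Type*}

/-- Natural projection onto a sub-alphabet `S`: erase the letters not in `S`. -/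
noncomputable def proj (S : Set A) (l : List A) : List A :=
  l.filter (fun a => decide (a ∈ S))

/-- The least language containing `ε` and closed under appending an event `σ`
allowed by `allow` at `s`, provided the result lies in the plant language `LG`. -/
inductive Lang (LG : Set (List A)) (allow : List A → Set A) : List A → Prop
  | nil : Lang LG allow []
  | snoc {s : List A} {σ : A} : Lang LG allow s → σ ∈ allow s →
      (s ++ [σ]) ∈ LG → Lang LG allow (s ++ [σ])

/-- The closed-loop language `L(V/G)`. -/
def LVG (LG : Set (List A)) (So : Set A) (V : List A → Set A) :
    Set (List A) :=
  {s | Lang LG (fun t => V (proj So t)) s}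

/-- Auxiliary function for the attacker-observation map: `pre` is the prefix
of the supervisor observation sequence already processed. -/
noncomputable def phatAux (V : List A → Set A) (SoA : Set A) :
    List A → List A → List (List A × Set A)
  | _, [] => []
  | pre, σ :: rest =>
      (proj SoA [σ], V (pre ++ [σ])) :: phatAux V SoA (pre ++ [σ]) rest

/-- The attacker-observation map `P̂`: the i-th letter of `P̂(σ₁⋯σₙ)` is
`(P_{o,A}(σᵢ), V(σ₁⋯σᵢ))`. -/
noncomputable def phat (V : List A → Set A) (SoA : Set A) (w : List A) :
    List (List A × Set A) :=
  phatAux V SoA [] w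

/-- The attacked supervisor `V_A`. -/
noncomputable def VA (V : List A → Set A) (ScA SoA : Set A)
    (Att : List (List A × Set A) → Set A) (w : List A) : Set A :=
  (V w \ ScA) ∪ Att (phat V SoA w)

/-- The attacked closed-loop language `L(V_A/G)`. -/
def LVAG (LG : Set (List A)) (So : Set A) (V : List A → Set A)
    (ScA SoA : Set A) (Att : List (List A × Set A) → Set A) : Set (List A) :=
  {s | Lang LG (fun t =>
      {σ | proj So t ∈ proj So '' LVG LG So V ∧
           σ ∈ VA V ScA SoA Att (proj So t)}) s}

/-- An attacker is enabling if it enables every attackable event enabled by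
the supervisor. -/
def Enabling (LG : Set (List A)) (So : Set A) (V : List A → Set A)
    (ScA SoA : Set A) (Att : List (List A × Set A) → Set A) : Prop :=
  ∀ w ∈ proj So '' LVG LG So V, V w ∩ ScA ⊆ Att (phat V SoA w)

/-- An attacker is successful if the attacked closed-loop language meets the
damage set, and everything outside `P_o⁻¹(P_o(L(V/G)))` lies in `L_dmg·Σ*`. -/
def Successful (LG : Set (List A)) (So : Set A) (V : List A → Set A)
    (ScA SoA : Set A) (Att : List (List A × Set A) → Set A)
    (Ldmg : Set (List A)) : Prop :=
  (LVAG LG So V ScA SoA Att ∩ Ldmg).Nonempty ∧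
  LVAG LG So V ScA SoA Att \ (proj So ⁻¹' (proj So '' LVG LG So V)) ⊆
    {t | ∃ d ∈ Ldmg, d <+: t}

/-- `(s, σ)` is an attack pair. -/
def AttackPair (LG : Set (List A)) (So : Set A) (V : List A → Set A)
    (ScA SoA : Set A) (Ldmg : Set (List A)) (s : List A) (σ : A) : Prop :=
  s ∈ LVG LG So V ∧ σ ∈ ScA ∧ s ++ [σ] ∈ Ldmg ∧
  ∀ s' ∈ LVG LG So V,
    phat V SoA (proj So s) = phat V SoA (proj So s') →
    s' ++ [σ] ∈ LG → s' ++ [σ] ∈ Ldmg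

/-- `En(s, σ)`: one-step `σ`-extensions in `L(G)` of strings of `L(V/G)` that
are attacker-observation equivalent to `s`. -/
def En (LG : Set (List A)) (So : Set A) (V : List A → Set A)
    (SoA : Set A) (s : List A) (σ : A) : Set (List A) :=
  {t | ∃ s' ∈ LVG LG So V, t = s' ++ [σ] ∧ t ∈ LG ∧
       phat V SoA (proj So s) = phat V SoA (proj So s')}

/-- `I(ŵ)`: attackable events `σ` such that some string `s'` of `L(V/G)` with
attacker observation `ŵ` forms an attack pair `(s', σ)`. -/
def ISet (LG : Set (List A)) (So : Set A) (V : List A → Set A)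
    (ScA SoA : Set A) (Ldmg : Set (List A))
    (w : List (List A × Set A)) : Set A :=
  {σ | σ ∈ ScA ∧ ∃ s' ∈ LVG LG So V,
        phat V SoA (proj So s') = w ∧ AttackPair LG So V ScA SoA Ldmg s' σ}

/-- The supremal attacker `A^sup`. -/
def Asup (LG : Set (List A)) (So : Set A) (V : List A → Set A)
    (ScA SoA : Set A) (Ldmg : Set (List A))
    (w : List (List A × Set A)) : Set A :=
  {σ | ∃ s ∈ LVG LG So V, phat V SoA (proj So s) = w ∧
        σ ∈ V (proj So s) ∩ ScA} ∪
  ISet LG So V ScA SoA Ldmg w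

/-! Under normality every attackable event is observable. So if an attacked string `t σ`
with `t ∈ L(V/G)` is observationally equivalent to some `s' ∈ L(V/G)`, the last observable
event of `s'` is `σ`, which `V` must therefore have enabled after observing `P_o(t)`; hence
`t σ ∈ L(V/G)`. Inducting along the attacked string, every attacked string whose
observation lies in `P_o(L(V/G))` lies in `L(V/G)` itself. -/

theorem Lang.mono {LG : Set (List A)} {allow allow' : List A → Set A}
    (h : ∀ s, Lang LG allow s → allow s ⊆ allow' s) {s : List A} (hs : Lang LG allow s) :
    Lang LG allow' s := by
  induction hs with
  | nil => exact Lang.nil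
  | snoc ht hσ hlg ih => exact Lang.snoc ih (h _ ht hσ) hlg

theorem proj_append_singleton (S : Set A) (l : List A) (a : A) :
    proj S (l ++ [a]) = proj S l ++ if a ∈ S then [a] else [] := by
  by_cases ha : a ∈ S <;> simp [proj, ha]

section

variable {LG : Set (List A)} {So : Set A} {V : List A → Set A}

theorem mem_V_of_proj_eq_append_singleton {s w : List A} {σ : A} (hs : s ∈ LVG LG So V)
    (hσ : σ ∈ So) (hw : proj So s = w ++ [σ]) : σ ∈ V w := by
  induction hs with
  | nil => simp [proj] at hw
  | @snoc t τ _ hτ _ ih =>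
    rw [proj_append_singleton] at hw
    by_cases hτo : τ ∈ So
    · rw [if_pos hτo] at hw
      obtain ⟨rfl, hτσ⟩ := List.append_inj' hw rfl
      obtain rfl : τ = σ := by simpa using hτσ
      exact hτ
    · rw [if_neg hτo, List.append_nil] at hw
      exact ih hw

variable {ScA SoA : Set A} {Att : List (List A × Set A) → Set A}

theorem append_singleton_mem_LVG (hobs : ScA ⊆ So) (hAtt : ∀ x, Att x ⊆ ScA)
    {t : List A} {σ : A} (ht : t ∈ LVG LG So V) (hσ : σ ∈ VA V ScA SoA Att (proj So t))
    (hlg : t ++ [σ] ∈ LG) (himg : proj So (t ++ [σ]) ∈ proj So '' LVG LG So V) :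
    t ++ [σ] ∈ LVG LG So V := by
  refine Lang.snoc ht ?_ hlg
  rcases hσ with hV | hA
  · exact hV.1
  · have hσo : σ ∈ So := hobs (hAtt _ hA)
    obtain ⟨s', hs', hproj⟩ := himg
    rw [proj_append_singleton, if_pos hσo] at hproj
    exact mem_V_of_proj_eq_append_singleton hs' hσo hproj

theorem mem_LVG_of_mem_LVAG (hobs : ScA ⊆ So) (hAtt : ∀ x, Att x ⊆ ScA) {s : List A}
    (hs : s ∈ LVAG LG So V ScA SoA Att) (himg : proj So s ∈ proj So '' LVG LG So V) :
    s ∈ LVG LG So V := by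
  induction hs with
  | nil => exact Lang.nil
  | snoc _ hσ hlg ih => exact append_singleton_mem_LVG hobs hAtt (ih hσ.1) hσ.2 hlg himg

end

theorem stmt_1_general {A : Type*} (So Sc : Set A) (LG : Set (List A))
    (V : List A → Set A)
    (hnormV : Sc ⊆ So)
    (ScA SoA : Set A) (hcA : ScA ⊆ Sc)
    (Att : List (List A × Set A) → Set A) (hAtt : ∀ x, Att x ⊆ ScA) :
    LVAG LG So V ScA SoA Att =
      {s | Lang LG (fun t =>
        {σ | t ∈ LVG LG So V ∧ σ ∈ VA V ScA SoA Att (proj So t)}) s} := by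
  ext s
  constructor
  · refine Lang.mono fun t ht σ hσ => ?_
    exact ⟨mem_LVG_of_mem_LVAG (hcA.trans hnormV) hAtt ht hσ.1, hσ.2⟩
  · refine Lang.mono fun t _ σ hσ => ?_
    exact ⟨⟨t, hσ.1, rfl⟩, hσ.2⟩

/-- For a normal supervisor, in the inductive definition of
`L(V_A/G)` the side condition `P_o(s) ∈ P_o(L(V/G))` may be replaced by
`s ∈ L(V/G)`. -/
theorem stmt_1 {A : Type*} [Fintype A] (So Sc : Set A) (LG : Set (List A))
    (hnil : [] ∈ LG) (hpref : ∀ s t : List A, s <+: t → t ∈ LG → s ∈ LG)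
    (V : List A → Set A) (hV : ∀ w, Scᶜ ⊆ V w)
    (hnormV : Sc ⊆ So)
    (ScA SoA : Set A) (hcA : ScA ⊆ Sc) (hoA : SoA ⊆ So)
    (Att : List (List A × Set A) → Set A) (hAtt : ∀ x, Att x ⊆ ScA) :
    LVAG LG So V ScA SoA Att =
      {s | Lang LG (fun t =>
        {σ | t ∈ LVG LG So V ∧ σ ∈ VA V ScA SoA Att (proj So t)}) s} :=
  stmt_1_general So Sc LG V hnormV ScA SoA hcA Att hAtt

end ActuatorAttack
end

section
/- Let V be a normal supervisor on the plant G and let the attack constraint be normal (Σ_{c,A} ⊆ Σ_{o,A}). Then the following three statements are equivalent: (1) there exists a successful attacker; (2) there exists a successful enabling attacker; (3) there exists an attack pair, i.e., there exist s ∈ L(V/G) and σ ∈ Σ_{c,A} such that sσ ∈ L_dmg and, for every s' ∈ L(V/G) with P̂(P_o(s)) = P̂(P_o(s')) and s'σ ∈ L(G), one has s'σ ∈ L_dmg. -/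
/-!
An attacker can only enable events of `Σ_{c,A} ⊆ Σ_{o,A} ⊆ Σ_o`, which both the supervisor and
the attacker observe. So an attacked string first leaves `L(V/G)` by some `sσ` with
`s ∈ L(V/G)`, `σ ∈ Σ_{c,A}` enabled by the attacker only; since the attacker cannot tell `s`
from any `s' ∈ L(V/G)` with `P̂(P_o s') = P̂(P_o s)`, it also enables `σ` after `s'`, and
`s'σ ∈ L(G)` then leaves `P_o⁻¹ P_o L(V/G)`, so success forces `s'σ ∈ L_dmg`: `(s, σ)` is an
attack pair. Conversely, from an attack pair the supremal attacker `A^sup` (everything `V`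
enables, plus every event of an attack pair with the current observation) is enabling, reaches
`sσ ∈ L_dmg`, and can leave `L(V/G)` only through attack pairs, hence only into damage.
-/

open scoped Classical

namespace ActuatorAttack

variable {A : Type*}

lemma proj_append (S : Set A) (a b : List A) :
    proj S (a ++ b) = proj S a ++ proj S b :=
  List.filter_append ..

lemma proj_singleton_of_mem {S : Set A} {σ : A} (h : σ ∈ S) : proj S [σ] = [σ] := by
  simp [proj, h]

lemma eq_of_proj_singleton_eq {S : Set A} {ρ τ : A} (h : proj S [ρ] = [τ]) : ρ = τ := by
  by_cases hρ : ρ ∈ S <;> simp_all [proj]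

lemma exists_prefix_of_proj_eq {S : Set A} {u w₁ w₂ : List A} {σ : A}
    (h : proj S u = w₁ ++ σ :: w₂) : ∃ q, q ++ [σ] <+: u ∧ proj S q = w₁ := by
  obtain ⟨l₁, l₂, rfl, h₁, h₂⟩ := List.filter_eq_append_iff.mp h
  obtain ⟨m₁, m₂, rfl, hm₁, -, -⟩ := List.filter_eq_cons_iff.mp h₂
  refine ⟨l₁ ++ m₁, ⟨m₂, by simp⟩, ?_⟩
  rw [proj_append, show proj S m₁ = [] from List.filter_eq_nil_iff.mpr hm₁, List.append_nil]
  exact h₁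

namespace Lang

variable {LG : Set (List A)} {allow : List A → Set A}

lemma of_prefix {u p : List A} (h : Lang LG allow u) (hp : p <+: u) : Lang LG allow p := by
  induction h with
  | nil => rw [List.prefix_nil.mp hp]; exact nil
  | snoc hs hσ hG ih =>
      rcases List.prefix_concat_iff.mp hp with rfl | hp
      · exact snoc hs hσ hG
      · exact ih hp

lemma mem_allow_of_snoc {s : List A} {σ : A} (h : Lang LG allow (s ++ [σ])) :
    σ ∈ allow s := by
  generalize hu : s ++ [σ] = u at h
  cases h with
  | nil => simp at hu
  | snoc _ hτ _ =>
      obtain ⟨rfl, hσ⟩ := List.append_inj' hu rfl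
      rwa [List.singleton_inj.mp hσ]

lemma mem_of_proj_eq {S : Set A} {F : List A → Set A} {u w₁ w₂ : List A} {σ : A}
    (h : Lang LG (fun t => F (proj S t)) u) (hu : proj S u = w₁ ++ σ :: w₂) :
    σ ∈ F w₁ := by
  obtain ⟨q, hq, rfl⟩ := exists_prefix_of_proj_eq hu
  exact mem_allow_of_snoc (allow := fun t => F (proj S t)) (h.of_prefix hq)

end Lang

section Observation

variable {V : List A → Set A} {S : Set A}

lemma phatAux_append (pre a b : List A) :
    phatAux V S pre (a ++ b) = phatAux V S pre a ++ phatAux V S (pre ++ a) b := by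
  induction a generalizing pre with
  | nil => simp [phatAux]
  | cons x xs ih => simp [phatAux, ih]

lemma length_phatAux (pre w : List A) : (phatAux V S pre w).length = w.length := by
  induction w generalizing pre with
  | nil => rfl
  | cons x xs ih => simp [phatAux, ih]

lemma phat_append (a b : List A) : phat V S (a ++ b) = phat V S a ++ phatAux V S a b :=
  phatAux_append [] a b

lemma phat_snoc (w : List A) (σ : A) :
    phat V S (w ++ [σ]) = phat V S w ++ [(proj S [σ], V (w ++ [σ]))] :=
  phat_append w [σ]

lemma length_phat (w : List A) : (phat V S w).length = w.length :=
  length_phatAux [] w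

lemma phat_prefix_phat_append (a b : List A) : phat V S a <+: phat V S (a ++ b) :=
  ⟨_, (phat_append a b).symm⟩

lemma phat_snoc_inj {x y : List A} {ρ τ : A}
    (h : phat V S (x ++ [ρ]) = phat V S (y ++ [τ])) :
    phat V S x = phat V S y ∧ proj S [ρ] = proj S [τ] ∧ V (x ++ [ρ]) = V (y ++ [τ]) := by
  rw [phat_snoc, phat_snoc] at h
  obtain ⟨hxy, hlast⟩ := List.append_inj' h rfl
  simp only [List.cons.injEq, Prod.mk.injEq, and_true] at hlast
  exact ⟨hxy, hlast⟩

lemma V_eq_of_phat_eq {w w' : List A} (h : phat V S w = phat V S w') : V w = V w' := by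
  have hlen : w.length = w'.length := by simpa [length_phat] using congrArg List.length h
  rcases w.eq_nil_or_concat' with rfl | ⟨x, ρ, rfl⟩ <;>
    rcases w'.eq_nil_or_concat' with rfl | ⟨y, τ, rfl⟩
  · rfl
  · simp at hlen
  · simp at hlen
  · exact (phat_snoc_inj h).2.2

lemma exists_prefix_phat_eq {P : List (List A × Set A)} {w : List A} (h : P <+: phat V S w) :
    ∃ w', w' <+: w ∧ phat V S w' = P := by
  refine ⟨w.take P.length, w.take_prefix _, ?_⟩
  have hw : phat V S (w.take P.length) <+: phat V S w := by
    simpa using phat_prefix_phat_append (V := V) (S := S) (w.take P.length) (w.drop P.length)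
  have hP : P.length ≤ w.length := by simpa [length_phat] using h.length_le
  rw [List.prefix_iff_eq_take] at h hw
  rw [hw, h]
  simp [length_phat, hP]

lemma exists_eq_append_cons_of_phat_prefix {x w : List A} {τ : A} (hτ : τ ∈ S)
    (h : phat V S (x ++ [τ]) <+: phat V S w) :
    ∃ w₁ w₂, w = w₁ ++ τ :: w₂ ∧ phat V S w₁ = phat V S x := by
  obtain ⟨w', ⟨w₂, rfl⟩, hw'⟩ := exists_prefix_phat_eq h
  rcases w'.eq_nil_or_concat' with rfl | ⟨w₁, ρ, rfl⟩
  · simpa [length_phat] using congrArg List.length hw'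
  obtain ⟨hw₁, hρ, -⟩ := phat_snoc_inj hw'
  obtain rfl : ρ = τ := eq_of_proj_singleton_eq (hρ.trans (proj_singleton_of_mem hτ))
  exact ⟨w₁, w₂, by simp, hw₁⟩

end Observation

section Attack

variable {LG : Set (List A)} {So ScA SoA : Set A} {V : List A → Set A}
  {Att : List (List A × Set A) → Set A} {Ldmg : Set (List A)}

lemma snoc_mem_LVAG {p : List A} {τ : A} (hp : p ∈ LVG LG So V)
    (hpA : p ∈ LVAG LG So V ScA SoA Att) (hτ : τ ∈ VA V ScA SoA Att (proj So p))
    (hG : p ++ [τ] ∈ LG) : p ++ [τ] ∈ LVAG LG So V ScA SoA Att :=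
  Lang.snoc hpA ⟨⟨p, hp, rfl⟩, hτ⟩ hG

lemma proj_snoc_notMem_image {s : List A} {τ : A} (hτ : τ ∈ So) (hτV : τ ∉ V (proj So s)) :
    proj So (s ++ [τ]) ∉ proj So '' LVG LG So V := by
  rintro ⟨v, hv, hvs⟩
  rw [proj_append, proj_singleton_of_mem hτ] at hvs
  exact hτV (Lang.mem_of_proj_eq (F := V) (w₂ := []) hv hvs)

lemma mem_attack_of_phat_prefix {u w : List A} {τ : A} (hτc : τ ∈ ScA) (hτo : τ ∈ SoA)
    (hu : u ∈ LVAG LG So V ScA SoA Att)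
    (h : phat V SoA (w ++ [τ]) <+: phat V SoA (proj So u)) : τ ∈ Att (phat V SoA w) := by
  obtain ⟨w₁, w₂, hw, hw₁⟩ := exists_eq_append_cons_of_phat_prefix hτo h
  rcases (Lang.mem_of_proj_eq (F := fun w => {σ | w ∈ proj So '' LVG LG So V ∧
      σ ∈ VA V ScA SoA Att w}) hu hw).2 with hτV | hτA
  · exact absurd hτc hτV.2
  · rwa [← hw₁]

/-- Every event of `Σ_{c,A}` along `s` is seen by the attacker, so it was enabled by the
attacker at the matching point of `u`. -/
lemma mem_LVAG_of_phat_prefix (hoA : SoA ⊆ So) (hnormA : ScA ⊆ SoA) {s u : List A}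
    (hs : s ∈ LVG LG So V) (hu : u ∈ LVAG LG So V ScA SoA Att)
    (h : phat V SoA (proj So s) <+: phat V SoA (proj So u)) :
    s ∈ LVAG LG So V ScA SoA Att := by
  induction hs with
  | nil => exact Lang.nil
  | @snoc p τ hp hτ hG ih =>
      rw [proj_append] at h
      refine snoc_mem_LVAG hp (ih ((phat_prefix_phat_append _ _).trans h)) ?_ hG
      by_cases hτc : τ ∈ ScA
      · rw [proj_singleton_of_mem (hoA (hnormA hτc))] at h
        exact Or.inr (mem_attack_of_phat_prefix hτc (hnormA hτc) hu h)
      · exact Or.inl ⟨hτ, hτc⟩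

lemma snoc_mem_Ldmg_of_successful (hLdV : Ldmg ∩ LVG LG So V = ∅)
    (hS : Successful LG So V ScA SoA Att Ldmg) {s : List A} {τ : A} (hs : s ∈ LVG LG So V)
    (hsA : s ∈ LVAG LG So V ScA SoA Att) (hτo : τ ∈ So) (hτV : τ ∉ V (proj So s))
    (hτA : τ ∈ Att (phat V SoA (proj So s))) (hG : s ++ [τ] ∈ LG) : s ++ [τ] ∈ Ldmg := by
  obtain ⟨d, hd, hds⟩ :=
    hS.2 ⟨snoc_mem_LVAG hs hsA (Or.inr hτA) hG, proj_snoc_notMem_image hτo hτV⟩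
  rcases List.prefix_concat_iff.mp hds with rfl | hds
  · exact hd
  · exact absurd (hLdV.subset ⟨hd, Lang.of_prefix hs hds⟩) (Set.notMem_empty d)

lemma attackPair_of_mem_attack (hoA : SoA ⊆ So) (hnormA : ScA ⊆ SoA)
    (hLdV : Ldmg ∩ LVG LG So V = ∅) (hsub : ∀ x, Att x ⊆ ScA)
    (hS : Successful LG So V ScA SoA Att Ldmg) {u : List A} {τ : A} (hu : u ∈ LVG LG So V)
    (huA : u ∈ LVAG LG So V ScA SoA Att) (hτV : τ ∉ V (proj So u))
    (hτA : τ ∈ Att (phat V SoA (proj So u))) (hG : u ++ [τ] ∈ LG) :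
    AttackPair LG So V ScA SoA Ldmg u τ := by
  have hτc : τ ∈ ScA := hsub _ hτA
  have hdmg : ∀ s ∈ LVG LG So V, phat V SoA (proj So u) = phat V SoA (proj So s) →
      s ++ [τ] ∈ LG → s ++ [τ] ∈ Ldmg := fun s hs hus hGs =>
    snoc_mem_Ldmg_of_successful hLdV hS hs
      (mem_LVAG_of_phat_prefix hoA hnormA hs huA (hus ▸ List.prefix_refl _))
      (hoA (hnormA hτc)) (V_eq_of_phat_eq hus ▸ hτV) (hus ▸ hτA) hGs
  exact ⟨hu, hτc, hdmg u hu rfl hG, hdmg⟩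

/-- An attacked string leaves `L(V/G)` for the first time through an attack pair. -/
lemma exists_attackPair_of_successful (hoA : SoA ⊆ So) (hnormA : ScA ⊆ SoA)
    (hLdV : Ldmg ∩ LVG LG So V = ∅) (hsub : ∀ x, Att x ⊆ ScA)
    (hS : Successful LG So V ScA SoA Att Ldmg) :
    ∃ s σ, AttackPair LG So V ScA SoA Ldmg s σ := by
  have hLVAG : ∀ t ∈ LVAG LG So V ScA SoA Att,
      t ∈ LVG LG So V ∨ ∃ s σ, AttackPair LG So V ScA SoA Ldmg s σ := by
    intro t ht
    induction ht with
    | nil => exact Or.inl Lang.nil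
    | @snoc u τ huA hτ hG ih =>
        refine ih.elim (fun hu => ?_) Or.inr
        by_cases hτV : τ ∈ V (proj So u)
        · exact Or.inl (Lang.snoc hu hτV hG)
        · have hτA : τ ∈ Att (phat V SoA (proj So u)) := hτ.2.resolve_left (hτV ·.1)
          exact Or.inr ⟨u, τ, attackPair_of_mem_attack hoA hnormA hLdV hsub hS hu huA hτV hτA hG⟩
  obtain ⟨t, htA, htd⟩ := hS.1
  exact (hLVAG t htA).resolve_left fun ht => hLdV.subset ⟨htd, ht⟩

lemma Enabling.LVG_subset_LVAG (hAtt : Enabling LG So V ScA SoA Att) :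
    LVG LG So V ⊆ LVAG LG So V ScA SoA Att := by
  intro t ht
  induction ht with
  | nil => exact Lang.nil
  | @snoc p τ hp hτ hG ih =>
      refine snoc_mem_LVAG hp ih ?_ hG
      by_cases hτc : τ ∈ ScA
      · exact Or.inr (hAtt _ ⟨p, hp, rfl⟩ ⟨hτ, hτc⟩)
      · exact Or.inl ⟨hτ, hτc⟩

lemma Asup_subset (x : List (List A × Set A)) : Asup LG So V ScA SoA Ldmg x ⊆ ScA := by
  rintro σ (⟨-, -, -, -, hσ⟩ | ⟨hσ, -⟩) <;> exact hσ

lemma enabling_Asup : Enabling LG So V ScA SoA (Asup LG So V ScA SoA Ldmg) := by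
  rintro w ⟨s, hs, rfl⟩ σ hσ
  exact Or.inl ⟨s, hs, rfl, hσ⟩

lemma mem_LVG_or_dmg_prefix_of_mem_LVAG_Asup {t : List A}
    (ht : t ∈ LVAG LG So V ScA SoA (Asup LG So V ScA SoA Ldmg)) :
    t ∈ LVG LG So V ∨ ∃ d ∈ Ldmg, d <+: t := by
  induction ht with
  | nil => exact Or.inl Lang.nil
  | @snoc u τ _ hτ hG ih =>
      rcases ih with hu | ⟨d, hd, hdu⟩
      · rcases hτ.2 with ⟨hτV, -⟩ | ⟨t', -, ht'u, hτV, -⟩ | ⟨-, s, hs, hsu, -, -, -, hdmg⟩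
        · exact Or.inl (Lang.snoc hu hτV hG)
        · exact Or.inl (Lang.snoc hu (V_eq_of_phat_eq ht'u ▸ hτV) hG)
        · exact Or.inr ⟨u ++ [τ], hdmg u hu hsu hG, List.prefix_refl _⟩
      · exact Or.inr ⟨d, hd, hdu.trans (List.prefix_append _ _)⟩

lemma successful_Asup_of_attackPair (hLd : Ldmg ⊆ LG) {s : List A} {σ : A}
    (hsσ : AttackPair LG So V ScA SoA Ldmg s σ) :
    Successful LG So V ScA SoA (Asup LG So V ScA SoA Ldmg) Ldmg := by
  have ⟨hs, hσ, hsσd, _⟩ := hsσ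
  refine ⟨⟨s ++ [σ], ?_, hsσd⟩, fun t ⟨ht, htV⟩ => ?_⟩
  · exact snoc_mem_LVAG hs (enabling_Asup.LVG_subset_LVAG hs)
      (Or.inr (Or.inr ⟨hσ, s, hs, rfl, hsσ⟩)) (hLd hsσd)
  · exact (mem_LVG_or_dmg_prefix_of_mem_LVAG_Asup ht).resolve_left fun h => htV ⟨t, h, rfl⟩

end Attack

theorem stmt_8_general {A : Type*} (So : Set A) (LG : Set (List A))
    (V : List A → Set A)
    (ScA SoA : Set A) (hoA : SoA ⊆ So)
    (hnormA : ScA ⊆ SoA)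
    (Ldmg : Set (List A)) (hLd : Ldmg ⊆ LG)
    (hLdV : Ldmg ∩ LVG LG So V = ∅) :
    ((∃ Att : List (List A × Set A) → Set A, (∀ x, Att x ⊆ ScA) ∧
        Successful LG So V ScA SoA Att Ldmg) ↔
      (∃ Att : List (List A × Set A) → Set A, (∀ x, Att x ⊆ ScA) ∧
        Enabling LG So V ScA SoA Att ∧
        Successful LG So V ScA SoA Att Ldmg)) ∧
    ((∃ Att : List (List A × Set A) → Set A, (∀ x, Att x ⊆ ScA) ∧
        Successful LG So V ScA SoA Att Ldmg) ↔
      (∃ s σ, AttackPair LG So V ScA SoA Ldmg s σ)) := by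
  have attackPair_of_attacker : (∃ Att : List (List A × Set A) → Set A, (∀ x, Att x ⊆ ScA) ∧
      Successful LG So V ScA SoA Att Ldmg) → ∃ s σ, AttackPair LG So V ScA SoA Ldmg s σ :=
    fun ⟨_, hsub, hS⟩ => exists_attackPair_of_successful hoA hnormA hLdV hsub hS
  have enabling_of_attackPair : (∃ s σ, AttackPair LG So V ScA SoA Ldmg s σ) →
      ∃ Att : List (List A × Set A) → Set A, (∀ x, Att x ⊆ ScA) ∧
        Enabling LG So V ScA SoA Att ∧ Successful LG So V ScA SoA Att Ldmg :=
    fun ⟨_, _, hsσ⟩ =>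
      ⟨_, Asup_subset, enabling_Asup, successful_Asup_of_attackPair hLd hsσ⟩
  have attacker_of_enabling : (∃ Att : List (List A × Set A) → Set A, (∀ x, Att x ⊆ ScA) ∧
      Enabling LG So V ScA SoA Att ∧ Successful LG So V ScA SoA Att Ldmg) →
      ∃ Att : List (List A × Set A) → Set A, (∀ x, Att x ⊆ ScA) ∧
        Successful LG So V ScA SoA Att Ldmg :=
    fun ⟨Att, hsub, _, hS⟩ => ⟨Att, hsub, hS⟩
  exact ⟨⟨enabling_of_attackPair ∘ attackPair_of_attacker, attacker_of_enabling⟩,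
    ⟨attackPair_of_attacker, attacker_of_enabling ∘ enabling_of_attackPair⟩⟩

/-- For a normal supervisor and a normal attack constraint,
the existence of a successful attacker, of a successful enabling attacker,
and of an attack pair are all equivalent. -/
theorem stmt_8 {A : Type*} [Fintype A] (So Sc : Set A) (LG : Set (List A))
    (hnil : [] ∈ LG) (hpref : ∀ s t : List A, s <+: t → t ∈ LG → s ∈ LG)
    (V : List A → Set A) (hV : ∀ w, Scᶜ ⊆ V w)
    (hnormV : Sc ⊆ So)
    (ScA SoA : Set A) (hcA : ScA ⊆ Sc) (hoA : SoA ⊆ So)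
    (hnormA : ScA ⊆ SoA)
    (Ldmg : Set (List A)) (hLd : Ldmg ⊆ LG)
    (hLdV : Ldmg ∩ LVG LG So V = ∅) :
    ((∃ Att : List (List A × Set A) → Set A, (∀ x, Att x ⊆ ScA) ∧
        Successful LG So V ScA SoA Att Ldmg) ↔
      (∃ Att : List (List A × Set A) → Set A, (∀ x, Att x ⊆ ScA) ∧
        Enabling LG So V ScA SoA Att ∧
        Successful LG So V ScA SoA Att Ldmg)) ∧
    ((∃ Att : List (List A × Set A) → Set A, (∀ x, Att x ⊆ ScA) ∧
        Successful LG So V ScA SoA Att Ldmg) ↔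
      (∃ s σ, AttackPair LG So V ScA SoA Ldmg s σ)) :=
  stmt_8_general So LG V ScA SoA hoA hnormA Ldmg hLd hLdV

end ActuatorAttack
end

section
/- Let V be a supervisor on the plant G with attack constraint (Σ_{c,A}, Σ_{o,A}) and damage set L_dmg. For every s ∈ L(V/G), the sets I(P̂(P_o(s))) and V(P_o(s)) are disjoint: I(P̂(P_o(s))) ∩ V(P_o(s)) = ∅. -/
open scoped Classical

namespace ActuatorAttack

variable {A : Type*}

/-! The attacker observation `P̂(w)` ends with the control pattern `V(w)`, so attacker-equivalent
strings receive the same control pattern. If `σ ∈ I(P̂(P_o(s)))` were also enabled at `s`, the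
witnessing attack pair `(s', σ)` would have `σ` enabled at `s'`, putting `s'σ` into
`L(V/G) ∩ L_dmg = ∅`. -/

lemma V_append_eq_of_phatAux_eq (V : List A → Set A) (SoA : Set A) :
    ∀ (w₁ pre₁ pre₂ w₂ : List A), V pre₁ = V pre₂ →
      phatAux V SoA pre₁ w₁ = phatAux V SoA pre₂ w₂ → V (pre₁ ++ w₁) = V (pre₂ ++ w₂)
  | [], _, _, [], hV, _ => by simpa using hV
  | [], _, _, _ :: _, _, h => by simp [phatAux] at h
  | _ :: _, _, _, [], _, h => by simp [phatAux] at h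
  | σ :: w₁, pre₁, pre₂, τ :: w₂, _, h => by
      simp only [phatAux, List.cons.injEq, Prod.mk.injEq] at h
      simpa using V_append_eq_of_phatAux_eq V SoA w₁ (pre₁ ++ [σ]) (pre₂ ++ [τ]) w₂ h.1.2 h.2

lemma V_eq_of_phat_eq_s12 (V : List A → Set A) (SoA : Set A) {w₁ w₂ : List A}
    (h : phat V SoA w₁ = phat V SoA w₂) : V w₁ = V w₂ := by
  simpa using V_append_eq_of_phatAux_eq V SoA w₁ [] [] w₂ rfl h

lemma AttackPair.notMem_V {LG : Set (List A)} {So : Set A} {V : List A → Set A}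
    {ScA SoA : Set A} {Ldmg : Set (List A)} (hLd : Ldmg ⊆ LG)
    (hLdV : Ldmg ∩ LVG LG So V = ∅) {s : List A} {σ : A}
    (hap : AttackPair LG So V ScA SoA Ldmg s σ) : σ ∉ V (proj So s) := by
  obtain ⟨hs, -, hdmg, -⟩ := hap
  intro hσ
  have hclosed : s ++ [σ] ∈ LVG LG So V := Lang.snoc hs hσ (hLd hdmg)
  exact (Set.eq_empty_iff_forall_notMem.mp hLdV) _ ⟨hdmg, hclosed⟩

theorem stmt_12_general {A : Type*} (So : Set A) (LG : Set (List A))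
    (V : List A → Set A)
    (ScA SoA : Set A)
    (Ldmg : Set (List A)) (hLd : Ldmg ⊆ LG)
    (hLdV : Ldmg ∩ LVG LG So V = ∅)
    (s : List A) :
    ISet LG So V ScA SoA Ldmg (phat V SoA (proj So s)) ∩ V (proj So s) = ∅ := by
  refine Set.eq_empty_iff_forall_notMem.mpr ?_
  rintro σ ⟨⟨-, s', -, hobs, hap⟩, hσ⟩
  rw [← V_eq_of_phat_eq_s12 V SoA hobs] at hσ
  exact hap.notMem_V hLd hLdV hσ

/-- For every `s ∈ L(V/G)`, the sets `I(P̂(P_o(s)))` and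
`V(P_o(s))` are disjoint. -/
theorem stmt_12 {A : Type*} [Fintype A] (So Sc : Set A) (LG : Set (List A))
    (hnil : [] ∈ LG) (hpref : ∀ s t : List A, s <+: t → t ∈ LG → s ∈ LG)
    (V : List A → Set A) (hV : ∀ w, Scᶜ ⊆ V w)
    (ScA SoA : Set A) (hcA : ScA ⊆ Sc) (hoA : SoA ⊆ So)
    (Ldmg : Set (List A)) (hLd : Ldmg ⊆ LG)
    (hLdV : Ldmg ∩ LVG LG So V = ∅)
    (s : List A) (hs : s ∈ LVG LG So V) :
    ISet LG So V ScA SoA Ldmg (phat V SoA (proj So s)) ∩ V (proj So s) = ∅ :=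
  stmt_12_general So LG V ScA SoA Ldmg hLd hLdV s

end ActuatorAttack
end
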